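/- Let ρ be a positive semidefinite operator with 0 < tr ρ ≤ 1 on a finite-dimensional Hilbert space and Π a projector. Then the purified distance satisfies P(ρ, ΠρΠ) ≤ √(2 tr(Π^⊥ ρ) − (tr(Π^⊥ ρ))²), where Π^⊥ = 1 − Π. -/

import Mathlib

open Matrix Kronecker ComplexOrder

noncomputable section

/-- Apply a real function to the eigenvalues of a Hermitian matrix. -/
def hermCFC {n : Type*} [Fintype n] [DecidableEq n] (f : ℝ → ℝ)
    (M : Matrix n n ℂ) : Matrix n n ℂ :=
  if h : M.IsHermitian then h.cfc f else 0

/-- The operator absolute value `|M| = √(Mᴴ M)`. -/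
def matAbs {n : Type*} [Fintype n] [DecidableEq n] (M : Matrix n n ℂ) :
    Matrix n n ℂ :=
  (Matrix.posSemidef_conjTranspose_mul_self M).1.eigenvectorUnitary.1 *
    diagonal ((↑) ∘ Real.sqrt ∘ (Matrix.posSemidef_conjTranspose_mul_self M).1.eigenvalues) *
    (star (Matrix.posSemidef_conjTranspose_mul_self M).1.eigenvectorUnitary : Matrix n n ℂ)

/-- The trace norm `‖M‖₁ = tr |M|`. -/
def traceNorm {n : Type*} [Fintype n] [DecidableEq n] (M : Matrix n n ℂ) : ℝ :=
  (matAbs M).trace.re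

/-- Matrix square root via eigenvalues. -/
def matSqrt {n : Type*} [Fintype n] [DecidableEq n] (M : Matrix n n ℂ) :
    Matrix n n ℂ :=
  hermCFC Real.sqrt M

/-- Generalized fidelity `F̄(ρ,τ) = tr|√ρ√τ| + √((1−tr ρ)(1−tr τ))` for
subnormalized states. -/
def genFid {n : Type*} [Fintype n] [DecidableEq n] (ρ τ : Matrix n n ℂ) : ℝ :=
  traceNorm (matSqrt ρ * matSqrt τ) +
    Real.sqrt ((1 - ρ.trace.re) * (1 - τ.trace.re))

/-- Purified distance `P(ρ,τ) = √(1 − F̄(ρ,τ)²)`. -/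
def purifiedDist {n : Type*} [Fintype n] [DecidableEq n]
    (ρ τ : Matrix n n ℂ) : ℝ :=
  Real.sqrt (1 - genFid ρ τ ^ 2)

/-!
With `τ = ΠρΠ` one has `τ Π^⊥ = 0`, which forces `√τ Π^⊥ = 0`, i.e. `√τ Π = √τ`.
Hence `(√ρ√τ)ᴴ(√ρ√τ) = √τ Π ρ Π √τ = τ²`, so `|√ρ√τ| = τ` and
`tr|√ρ√τ| = tr τ = tr ρ - ε` with `ε = tr(Π^⊥ρ) ≥ 0`. Since `1 - tr τ ≥ 1 - tr ρ`,
the second term of `F̄(ρ,τ)` is at least `1 - tr ρ`, so `F̄(ρ,τ) ≥ 1 - ε` and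
`P(ρ,τ)² ≤ 1 - (1 - ε)² = 2ε - ε²`.
-/

open scoped MatrixOrder

section

variable {n : Type*} [Fintype n]

lemma Matrix.PosSemidef.re_trace_nonneg {A : Matrix n n ℂ} (hA : A.PosSemidef) :
    0 ≤ A.trace.re :=
  (Complex.nonneg_iff.mp hA.trace_nonneg).1

lemma Matrix.PosSemidef.compression {A P : Matrix n n ℂ} (hA : A.PosSemidef)
    (hP : IsSelfAdjoint P) : (P * A * P).PosSemidef := by
  simpa only [hP.isHermitian.eq] using hA.mul_mul_conjTranspose_same P

lemma trace_compression_of_isIdempotentElem {A P : Matrix n n ℂ} (hP : IsIdempotentElem P) :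
    (P * A * P).trace = (P * A).trace := by
  rw [trace_mul_cycle, hP.eq]

variable [DecidableEq n]

lemma re_trace_one_sub_mul {A P : Matrix n n ℂ} (hP : IsIdempotentElem P) :
    ((1 - P) * A).trace.re = A.trace.re - (P * A * P).trace.re := by
  rw [Matrix.sub_mul, Matrix.one_mul, trace_sub, trace_compression_of_isIdempotentElem hP,
    Complex.sub_re]

lemma re_trace_one_sub_mul_nonneg {A P : Matrix n n ℂ} (hA : A.PosSemidef)
    (hP : IsStarProjection P) : 0 ≤ ((1 - P) * A).trace.re := by
  rw [← trace_compression_of_isIdempotentElem hP.one_sub.isIdempotentElem]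
  exact (hA.compression hP.one_sub.isSelfAdjoint).re_trace_nonneg

lemma Matrix.PosSemidef.matSqrt_eq {A : Matrix n n ℂ} (hA : A.PosSemidef) :
    matSqrt A = CFC.sqrt A := by
  rw [matSqrt, hermCFC, dif_pos hA.1, ← hA.1.cfc_eq, CFC.sqrt_eq_cfc,
    cfc_nnreal_eq_real _ A hA.nonneg]
  congr 1
  funext x
  rw [Real.sqrt]

lemma matAbs_eq_matSqrt (M : Matrix n n ℂ) : matAbs M = matSqrt (Mᴴ * M) := by
  rw [matAbs, matSqrt, hermCFC, dif_pos (posSemidef_conjTranspose_mul_self M).1,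
    IsHermitian.cfc, Unitary.conjStarAlgAut_apply]
  rfl

lemma matAbs_eq_of_conjTranspose_mul_self_eq_sq {X τ : Matrix n n ℂ} (hτ : τ.PosSemidef)
    (hX : Xᴴ * X = τ ^ 2) : matAbs X = τ := by
  rw [matAbs_eq_matSqrt, (posSemidef_conjTranspose_mul_self X).matSqrt_eq, hX]
  exact CFC.sqrt_sq τ hτ.nonneg

lemma sqrt_mul_eq_zero_of_mul_eq_zero {τ Q : Matrix n n ℂ} (hτ : τ.PosSemidef)
    (hτQ : τ * Q = 0) : CFC.sqrt τ * Q = 0 := by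
  have hS : (CFC.sqrt τ).IsHermitian := (CFC.sqrt_nonneg τ).isSelfAdjoint.isHermitian
  refine conjTranspose_mul_self_eq_zero.mp ?_
  rw [conjTranspose_mul, hS.eq, Matrix.mul_assoc, ← Matrix.mul_assoc (CFC.sqrt τ),
    CFC.sqrt_mul_sqrt_self τ hτ.nonneg, hτQ, Matrix.mul_zero]

lemma traceNorm_matSqrt_mul_matSqrt_compression {ρ P : Matrix n n ℂ} (hρ : ρ.PosSemidef)
    (hP : IsStarProjection P) :
    traceNorm (matSqrt ρ * matSqrt (P * ρ * P)) = (P * ρ * P).trace.re := by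
  set τ := P * ρ * P
  have hτ : τ.PosSemidef := hρ.compression hP.isSelfAdjoint
  set R := CFC.sqrt ρ
  set S := CFC.sqrt τ
  have hR : R.IsHermitian := (CFC.sqrt_nonneg ρ).isSelfAdjoint.isHermitian
  have hS : S.IsHermitian := (CFC.sqrt_nonneg τ).isSelfAdjoint.isHermitian
  have hSP : S * P = S := by
    have : τ * (1 - P) = 0 := by
      simp only [τ, Matrix.mul_assoc, hP.mul_one_sub_self, Matrix.mul_zero]
    simpa only [Matrix.mul_sub, Matrix.mul_one, sub_eq_zero, eq_comm]
      using sqrt_mul_eq_zero_of_mul_eq_zero hτ this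
  have hPS : P * S = S := by
    simpa only [conjTranspose_mul, hS.eq, hP.isSelfAdjoint.isHermitian.eq]
      using congrArg conjTranspose hSP
  have hSS : S * S = τ := CFC.sqrt_mul_sqrt_self τ hτ.nonneg
  have hRSsq : (R * S)ᴴ * (R * S) = τ ^ 2 :=
    calc (R * S)ᴴ * (R * S) = S * (R * R) * S := by
          rw [conjTranspose_mul, hR.eq, hS.eq]; noncomm_ring
      _ = (S * P) * ρ * (P * S) := by rw [CFC.sqrt_mul_sqrt_self ρ hρ.nonneg, hSP, hPS]
      _ = S * (S * S) * S := by rw [hSS]; simp only [τ]; noncomm_ring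
      _ = τ ^ 2 := by rw [sq, ← hSS]; noncomm_ring
  rw [hρ.matSqrt_eq, hτ.matSqrt_eq, traceNorm,
    matAbs_eq_of_conjTranspose_mul_self_eq_sq hτ hRSsq]

lemma one_sub_re_trace_one_sub_mul_le_genFid {ρ P : Matrix n n ℂ} (hρ : ρ.PosSemidef)
    (hρtr1 : ρ.trace.re ≤ 1) (hP : IsStarProjection P) :
    1 - ((1 - P) * ρ).trace.re ≤ genFid ρ (P * ρ * P) := by
  have hε := re_trace_one_sub_mul_nonneg hρ hP
  rw [re_trace_one_sub_mul hP.isIdempotentElem] at hε ⊢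
  rw [genFid, traceNorm_matSqrt_mul_matSqrt_compression hρ hP]
  have : 1 - ρ.trace.re ≤ √((1 - ρ.trace.re) * (1 - (P * ρ * P).trace.re)) :=
    Real.le_sqrt_of_sq_le (by nlinarith)
  linarith

lemma purifiedDist_le_of_one_sub_le_genFid {ρ τ : Matrix n n ℂ} {ε : ℝ} (hε : ε ≤ 1)
    (hF : 1 - ε ≤ genFid ρ τ) : purifiedDist ρ τ ≤ √(2 * ε - ε ^ 2) := by
  refine Real.sqrt_le_sqrt ?_
  nlinarith

end

theorem purifiedDist_projection_bound_general {d : ℕ} (ρ Pj : Matrix (Fin d) (Fin d) ℂ)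
    (hρ : ρ.PosSemidef) (hρtr1 : ρ.trace.re ≤ 1)
    (hPj : Pj.IsHermitian) (hPj2 : Pj * Pj = Pj) :
    purifiedDist ρ (Pj * ρ * Pj) ≤
      Real.sqrt (2 * (((1 - Pj) * ρ).trace.re) - (((1 - Pj) * ρ).trace.re) ^ 2) := by
  have hP : IsStarProjection Pj := ⟨hPj2, hPj.isSelfAdjoint⟩
  have hτ := (hρ.compression hP.isSelfAdjoint).re_trace_nonneg
  have hε := re_trace_one_sub_mul (A := ρ) hP.isIdempotentElem
  exact purifiedDist_le_of_one_sub_le_genFid (ε := ((1 - Pj) * ρ).trace.re) (by linarith)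
    (one_sub_re_trace_one_sub_mul_le_genFid hρ hρtr1 hP)

/-- The purified distance between a subnormalized state `ρ` and the projected
state `ΠρΠ` is at most `√(2 tr(Π^⊥ρ) − (tr(Π^⊥ρ))²)`, where `Π^⊥ = 1 − Π`. -/
theorem purifiedDist_projection_bound {d : ℕ} (ρ Pj : Matrix (Fin d) (Fin d) ℂ)
    (hρ : ρ.PosSemidef) (hρtr : 0 < ρ.trace.re) (hρtr1 : ρ.trace.re ≤ 1)
    (hPj : Pj.IsHermitian) (hPj2 : Pj * Pj = Pj) :
    purifiedDist ρ (Pj * ρ * Pj) ≤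
      Real.sqrt (2 * (((1 - Pj) * ρ).trace.re) - (((1 - Pj) * ρ).trace.re) ^ 2) :=
  purifiedDist_projection_bound_general ρ Pj hρ hρtr1 hPj hPj2

end
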